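/- arXiv:1411.2417 — 5 statements merged into one kernel-verified Lean document; each statement's English description precedes it below -/
import Mathlib

section
/- Let T be a zero-structured matrix over F_q of size r×c with block structure indexed by subsets S of {1,…,t}: block b_{(S₁,S₂)} has size r_{S₁}×c_{S₂} and is constrained to be zero whenever S₁ ⊄ S₂, with other entries free. If q is sufficiently large, there exists an assignment of the free entries making T full column rank if and only if for every superset-saturated family Λ ⊆ 2^{{1,…,t}}, one has c ≤ Σ_{S∈Λ} c_S + Σ_{S∈Λᶜ} r_S. -/
/-!
A matrix supported on a pattern `P` can have full column rank over a field exactly when `P`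
satisfies Hall's condition. If `M` has full column rank, its columns indexed by `A` are
independent and have nonzero entries only in the rows adjacent to `A`, so `#A` is at most the
number of those rows. Conversely, a Hall matching `f` gives the 0/1 matrix whose column `j` is
the unit vector `e_{f j}`. The field plays no role, so `q0 = 0` works.

For the block pattern `S₁ ⊆ S₂` it is enough to check Hall's condition on the union of all
column blocks indexed by a down-closed family `D`. Its neighbours are the row blocks indexed by
`D`, so the condition reads `∑_{S ∈ D} c_S ≤ ∑_{S ∈ D} r_S`, and `Λ = Dᶜ` turns this into the
inequality of the theorem.
-/

def SupersetSaturated {t : ℕ} (Λ : Finset (Finset (Fin t))) : Prop :=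
  ∀ S ∈ Λ, ∀ T : Finset (Fin t), S ⊆ T → T ∈ Λ

open Finset Matrix

section SupportedMatrix

variable {ι κ F : Type*} [Fintype κ] [Field F]

theorem Matrix.rank_eq_card_width_iff_linearIndependent_col (M : Matrix ι κ F) :
    M.rank = Fintype.card κ ↔ LinearIndependent F M.col := by
  rw [linearIndependent_iff_card_eq_finrank_span, rank_eq_finrank_span_cols, Set.finrank, eq_comm]

theorem card_le_card_filter_of_rank_eq_card_width [Fintype ι] (P : ι → κ → Prop)
    [DecidableRel P] {M : Matrix ι κ F} (hM : ∀ i j, ¬ P i j → M i j = 0)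
    (hrank : M.rank = Fintype.card κ) (A : Finset κ) : #A ≤ #{i | ∃ j ∈ A, P i j} := by
  set N := M.submatrix id ((↑) : A → κ)
  have hN : LinearIndependent F N.col :=
    (M.rank_eq_card_width_iff_linearIndependent_col.mp hrank).comp _ Subtype.val_injective
  calc #A = N.rank := by
        rw [N.rank_eq_card_width_iff_linearIndependent_col.mpr hN, Fintype.card_coe]
    _ ≤ #{i | ∃ j ∈ A, P i j} := by
      refine rank_le_card_of_support_subset N _ (Function.support_subset_iff'.mpr fun i hi => ?_)
      ext j
      exact hM i j fun hP => hi (mem_filter.mpr ⟨mem_univ i, j, j.2, hP⟩)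

theorem exists_rank_eq_card_width_of_injective [Fintype ι] (P : ι → κ → Prop) {f : κ → ι}
    (hf : Function.Injective f) (hfP : ∀ j, P (f j) j) :
    ∃ M : Matrix ι κ F, (∀ i j, ¬ P i j → M i j = 0) ∧ M.rank = Fintype.card κ := by
  classical
  refine ⟨(Matrix.of fun j => Pi.basisFun F ι (f j))ᵀ, fun i j hij => ?_, ?_⟩
  · have : f j ≠ i := fun h => hij (h ▸ hfP j)
    simp [this.symm]
  · exact (rank_eq_card_width_iff_linearIndependent_col _).mpr
      ((Pi.basisFun F ι).linearIndependent.comp f hf)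

theorem exists_supported_rank_eq_card_width_iff [Fintype ι] (P : ι → κ → Prop) [DecidableRel P] :
    (∃ M : Matrix ι κ F, (∀ i j, ¬ P i j → M i j = 0) ∧ M.rank = Fintype.card κ) ↔
      ∀ A : Finset κ, #A ≤ #{i | ∃ j ∈ A, P i j} := by
  constructor
  · rintro ⟨M, hM, hrank⟩
    exact card_le_card_filter_of_rank_eq_card_width P hM hrank
  · intro hall
    obtain ⟨f, hf, hfP⟩ :=
      (Fintype.all_card_le_filter_rel_iff_exists_injective fun j i => P i j).mp hall
    exact exists_rank_eq_card_width_of_injective P hf hfP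

end SupportedMatrix

theorem card_sigma_univ_fin {α : Type*} (c : α → ℕ) (D : Finset α) :
    #(D.sigma fun a => (univ : Finset (Fin (c a)))) = ∑ a ∈ D, c a := by
  simp [card_sigma]

section BlockPattern

variable {α : Type*} [Preorder α] [Fintype α] [DecidableEq α] (r c : α → ℕ)

theorem forall_card_le_card_filter_le_iff_forall_isLowerSet [DecidableLE α] :
    (∀ A : Finset (Σ a, Fin (c a)), #A ≤ #{i : Σ a, Fin (r a) | ∃ j ∈ A, i.1 ≤ j.1}) ↔
      ∀ D : Finset α, IsLowerSet (D : Set α) → ∑ a ∈ D, c a ≤ ∑ a ∈ D, r a := by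
  constructor
  · intro hall D hD
    rw [← card_sigma_univ_fin, ← card_sigma_univ_fin]
    refine (hall _).trans (card_le_card fun i hi => ?_)
    obtain ⟨-, j, hj, hij⟩ := mem_filter.mp hi
    exact mem_sigma.mpr ⟨hD hij (mem_sigma.mp hj).1, mem_univ _⟩
  · intro hD A
    set D : Finset α := {a | ∃ j ∈ A, a ≤ j.1}
    have hDlower : IsLowerSet (D : Set α) := fun a b hba ha => by
      obtain ⟨j, hj, haj⟩ := by simpa [D] using ha
      simpa [D] using ⟨j, hj, hba.trans haj⟩
    calc #A ≤ #(D.sigma fun a => (univ : Finset (Fin (c a)))) :=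
          card_le_card fun j hj =>
            mem_sigma.mpr ⟨mem_filter.mpr ⟨mem_univ _, j, hj, le_rfl⟩, mem_univ _⟩
      _ ≤ #(D.sigma fun a => (univ : Finset (Fin (r a)))) := by
          rw [card_sigma_univ_fin, card_sigma_univ_fin]; exact hD D hDlower
      _ ≤ #{i : Σ a, Fin (r a) | ∃ j ∈ A, i.1 ≤ j.1} :=
          card_le_card fun i hi =>
            mem_filter.mpr ⟨mem_univ _, (mem_filter.mp (mem_sigma.mp hi).1).2⟩

theorem forall_isLowerSet_iff_forall_isUpperSet :
    (∀ D : Finset α, IsLowerSet (D : Set α) → ∑ a ∈ D, c a ≤ ∑ a ∈ D, r a) ↔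
      ∀ Λ : Finset α, IsUpperSet (Λ : Set α) → ∑ a, c a ≤ ∑ a ∈ Λ, c a + ∑ a ∈ Λᶜ, r a := by
  refine ⟨fun h Λ hΛ => ?_, fun h D hD => ?_⟩
  · rw [← sum_add_sum_compl Λ c]
    exact Nat.add_le_add_left (h Λᶜ (by simpa using hΛ.compl)) _
  · have := h Dᶜ (by simpa using hD.compl)
    rw [compl_compl, ← sum_add_sum_compl Dᶜ c, compl_compl] at this
    omega

theorem exists_block_supported_rank_eq_sum_iff [DecidableLE α] (F : Type*) [Field F] :
    (∃ M : Matrix (Σ a, Fin (r a)) (Σ a, Fin (c a)) F,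
        (∀ i j, ¬ i.1 ≤ j.1 → M i j = 0) ∧ M.rank = ∑ a, c a) ↔
      ∀ Λ : Finset α, IsUpperSet (Λ : Set α) → ∑ a, c a ≤ ∑ a ∈ Λ, c a + ∑ a ∈ Λᶜ, r a := by
  have hcard : ∑ a, c a = Fintype.card (Σ a, Fin (c a)) := by simp
  rw [hcard, exists_supported_rank_eq_card_width_iff, ← hcard,
    forall_card_le_card_filter_le_iff_forall_isLowerSet, forall_isLowerSet_iff_forall_isUpperSet]

end BlockPattern

theorem supersetSaturated_iff_isUpperSet {t : ℕ} (Λ : Finset (Finset (Fin t))) :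
    SupersetSaturated Λ ↔ IsUpperSet (Λ : Set (Finset (Fin t))) :=
  ⟨fun h _ T hST hS => h _ hS T hST, fun h _ hS _ hST => h hST hS⟩

/-- for a zero-structured matrix (block `(S₁,S₂)` of size `r_{S₁} × c_{S₂}`
forced to be zero when `S₁ ⊄ S₂`), for all sufficiently large finite fields there exists an
assignment of the free entries making it full column rank iff for every superset-saturated
family `Λ`, `c ≤ Σ_{S∈Λ} c_S + Σ_{S∈Λᶜ} r_S`. -/
theorem stmt3 {t : ℕ} (rS cS : Finset (Fin t) → ℕ) :
    ∃ q0 : ℕ, ∀ (F : Type) [Field F] [Fintype F], q0 ≤ Fintype.card F →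
      ((∃ M : Matrix ((S : Finset (Fin t)) × Fin (rS S)) ((S : Finset (Fin t)) × Fin (cS S)) F,
          (∀ i j, ¬ i.1 ⊆ j.1 → M i j = 0) ∧
          M.rank = ∑ S : Finset (Fin t), cS S)
        ↔ (∀ Λ : Finset (Finset (Fin t)), SupersetSaturated Λ →
            (∑ S : Finset (Fin t), cS S) ≤ ∑ S ∈ Λ, cS S + ∑ S ∈ Λᶜ, rS S)) := by
  refine ⟨0, fun F _ _ _ => ?_⟩
  simp only [supersetSaturated_iff_isUpperSet]
  exact exists_block_supported_rank_eq_sum_iff rS cS F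
end

section
/- In the equivalent four-layer unicast network (source A; nodes n_S with c_S parallel unit-capacity edges from A; nodes n'_S with r_S parallel unit-capacity edges to sink B; infinite-capacity edges from n_S to n'_{S'} exactly when S' ⊆ S), the minimum cut separating A and B equals min over superset-saturated Λ ⊆ 2^{{1,…,t}} of Σ_{S∈Λ} c_S + Σ_{S∈Λᶜ} r_S. -/
/-- Edges of the four-layer unicast network: `c_S` parallel source edges `A → n_S`,
one infinite-capacity middle edge `n_S → n'_{S'}` for every `S' ⊆ S` (the pair `(S,S')`),
and `r_S` parallel sink edges `n'_S → B`. -/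
abbrev NetEdge (t : ℕ) (cS rS : Finset (Fin t) → ℕ) : Type :=
  ((S : Finset (Fin t)) × Fin (cS S)) ⊕
    ((Finset (Fin t) × Finset (Fin t)) ⊕ ((S : Finset (Fin t)) × Fin (rS S)))

/-- Edge capacities: unit on source/sink edges, infinite on middle edges. -/
def cap {t : ℕ} (cS rS : Finset (Fin t) → ℕ) : NetEdge t cS rS → ℕ∞
  | .inl _ => 1
  | .inr (.inl _) => ⊤
  | .inr (.inr _) => 1

/-- `C` is a cut separating `A` and `B`: every path `A → n_S → n'_{S'} → B`
(with `S' ⊆ S`) uses an edge of `C`. -/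
def IsCut {t : ℕ} (cS rS : Finset (Fin t) → ℕ) (C : Finset (NetEdge t cS rS)) : Prop :=
  ∀ (S S' : Finset (Fin t)), S' ⊆ S → ∀ (k : Fin (cS S)) (j : Fin (rS S')),
    Sum.inl ⟨S, k⟩ ∈ C ∨ Sum.inr (Sum.inl (S, S')) ∈ C ∨ Sum.inr (Sum.inr ⟨S', j⟩) ∈ C

/-- Capacity of a cut. -/
def cutValue {t : ℕ} (cS rS : Finset (Fin t) → ℕ) (C : Finset (NetEdge t cS rS)) : ℕ∞ :=
  ∑ e ∈ C, cap cS rS e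


/-!
A cut of finite capacity contains no middle edge. Let `Λ` be the set of nodes `n_S` from which
`B` is still reachable, i.e. those `S` having a subset `S'` with a sink edge of `n'_{S'}` outside
the cut. This `Λ` is superset-saturated, and the cut must contain every source edge into `Λ` and
every sink edge out of `Λᶜ`; those edges alone cost `Σ_{S∈Λ} c_S + Σ_{S∈Λᶜ} r_S`. Conversely, for
a superset-saturated `Λ` those edges form a cut, since a path through `n_S ∉ Λ` ends at `n'_{S'}`
with `S' ⊆ S`, hence `S' ∉ Λ`.
-/

section FourLayerNetwork

variable {t : ℕ} (cS rS : Finset (Fin t) → ℕ)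

def cutOf (Λ : Finset (Finset (Fin t))) : Finset (NetEdge t cS rS) :=
  (Λ.sigma fun _ => Finset.univ).map ⟨Sum.inl, Sum.inl_injective⟩ ∪
    (Λᶜ.sigma fun _ => Finset.univ).map
      ⟨Sum.inr ∘ Sum.inr, Sum.inr_injective.comp Sum.inr_injective⟩

variable {cS rS}

@[simp]
lemma inl_mem_cutOf {Λ : Finset (Finset (Fin t))} {S : Finset (Fin t)} {k : Fin (cS S)} :
    (Sum.inl ⟨S, k⟩ : NetEdge t cS rS) ∈ cutOf cS rS Λ ↔ S ∈ Λ := by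
  simp [cutOf]

@[simp]
lemma inr_inl_notMem_cutOf {Λ : Finset (Finset (Fin t))} {p : Finset (Fin t) × Finset (Fin t)} :
    (Sum.inr (Sum.inl p) : NetEdge t cS rS) ∉ cutOf cS rS Λ := by
  simp [cutOf]

@[simp]
lemma inr_inr_mem_cutOf {Λ : Finset (Finset (Fin t))} {S : Finset (Fin t)} {j : Fin (rS S)} :
    (Sum.inr (Sum.inr ⟨S, j⟩) : NetEdge t cS rS) ∈ cutOf cS rS Λ ↔ S ∉ Λ := by
  simp [cutOf]

lemma cutValue_cutOf (Λ : Finset (Finset (Fin t))) :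
    cutValue cS rS (cutOf cS rS Λ) = ((∑ S ∈ Λ, cS S + ∑ S ∈ Λᶜ, rS S : ℕ) : ℕ∞) := by
  rw [cutValue, cutOf, Finset.sum_union (by simp [Finset.disjoint_left]),
    Finset.sum_map, Finset.sum_map]
  simp [cap]

lemma isCut_cutOf {Λ : Finset (Finset (Fin t))} (hΛ : SupersetSaturated Λ) :
    IsCut cS rS (cutOf cS rS Λ) := by
  intro S S' hS'S k j
  by_cases hS : S ∈ Λ
  · exact Or.inl (inl_mem_cutOf.mpr hS)
  · exact Or.inr (Or.inr (inr_inr_mem_cutOf.mpr fun hS' => hS (hΛ S' hS' S hS'S)))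

lemma cutValue_mono {C D : Finset (NetEdge t cS rS)} (h : C ⊆ D) :
    cutValue cS rS C ≤ cutValue cS rS D :=
  Finset.sum_le_sum_of_subset_of_nonneg h fun _ _ _ => zero_le

lemma inr_inl_notMem_of_cutValue_ne_top {C : Finset (NetEdge t cS rS)}
    (hC : cutValue cS rS C ≠ ⊤) (p : Finset (Fin t) × Finset (Fin t)) :
    Sum.inr (Sum.inl p) ∉ C := fun hp =>
  hC <| top_le_iff.mp (Finset.single_le_sum (f := cap cS rS) (fun _ _ => zero_le) hp)

open Classical in
/-- The nodes `n_S` from which the sink is still reachable after removing the edges of `C`. -/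
noncomputable def sinkReachable (C : Finset (NetEdge t cS rS)) : Finset (Finset (Fin t)) :=
  {S | ∃ S' ∈ S.powerset, ∃ j : Fin (rS S'), (Sum.inr (Sum.inr ⟨S', j⟩) : NetEdge t cS rS) ∉ C}

lemma mem_sinkReachable {C : Finset (NetEdge t cS rS)} {S : Finset (Fin t)} :
    S ∈ sinkReachable C ↔ ∃ S' ⊆ S, ∃ j : Fin (rS S'), Sum.inr (Sum.inr ⟨S', j⟩) ∉ C := by
  simp [sinkReachable]

lemma supersetSaturated_sinkReachable (C : Finset (NetEdge t cS rS)) :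
    SupersetSaturated (sinkReachable C) := by
  intro S hS T hST
  obtain ⟨S', hS'S, j, hj⟩ := mem_sinkReachable.mp hS
  exact mem_sinkReachable.mpr ⟨S', hS'S.trans hST, j, hj⟩

lemma cutOf_sinkReachable_subset {C : Finset (NetEdge t cS rS)} (hC : IsCut cS rS C)
    (hmid : ∀ p, Sum.inr (Sum.inl p) ∉ C) : cutOf cS rS (sinkReachable C) ⊆ C := by
  rintro (⟨S, k⟩ | p | ⟨S, j⟩) he
  · obtain ⟨S', hS'S, j, hj⟩ := mem_sinkReachable.mp (inl_mem_cutOf.mp he)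
    rcases hC S S' hS'S k j with h | h | h
    · exact h
    · exact absurd h (hmid _)
    · exact absurd h hj
  · exact absurd he inr_inl_notMem_cutOf
  · by_contra hj
    exact inr_inr_mem_cutOf.mp he (mem_sinkReachable.mpr ⟨S, subset_rfl, j, hj⟩)

lemma exists_supersetSaturated_le_cutValue {C : Finset (NetEdge t cS rS)} (hC : IsCut cS rS C) :
    ∃ Λ : Finset (Finset (Fin t)), SupersetSaturated Λ ∧
      ((∑ S ∈ Λ, cS S + ∑ S ∈ Λᶜ, rS S : ℕ) : ℕ∞) ≤ cutValue cS rS C := by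
  by_cases htop : cutValue cS rS C = ⊤
  · exact ⟨∅, fun _ h => absurd h (Finset.notMem_empty _), htop ▸ le_top⟩
  refine ⟨sinkReachable C, supersetSaturated_sinkReachable C, ?_⟩
  rw [← cutValue_cutOf]
  exact cutValue_mono (cutOf_sinkReachable_subset hC (inr_inl_notMem_of_cutValue_ne_top htop))

end FourLayerNetwork

/-- the minimum cut separating `A` and `B` equals
`min` over superset-saturated `Λ` of `Σ_{S∈Λ} c_S + Σ_{S∈Λᶜ} r_S`. -/
theorem stmt4 {t : ℕ} (cS rS : Finset (Fin t) → ℕ) :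
    sInf {v : ℕ∞ | ∃ C : Finset (NetEdge t cS rS), IsCut cS rS C ∧ cutValue cS rS C = v}
      = sInf {v : ℕ∞ | ∃ Λ : Finset (Finset (Fin t)), SupersetSaturated Λ ∧
          v = ((∑ S ∈ Λ, cS S + ∑ S ∈ Λᶜ, rS S : ℕ) : ℕ∞)} := by
  apply le_antisymm
  · refine le_sInf ?_
    rintro v ⟨Λ, hΛ, rfl⟩
    exact sInf_le ⟨cutOf cS rS Λ, isCut_cutOf hΛ, cutValue_cutOf Λ⟩
  · refine le_sInf ?_
    rintro v ⟨C, hC, rfl⟩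
    obtain ⟨Λ, hΛ, hle⟩ := exists_supersetSaturated_le_cutValue hC
    exact le_trans (sInf_le ⟨Λ, hΛ, rfl⟩) hle
end

section
/- If a multiset Λ of subsets is a compression (a finite sequence of elementary compressions) of a multiset Γ, then for any finite-entropy random vector X, Σ_{Γ'∈Γ} H(X_{Γ'}) ≥ Σ_{Λ'∈Λ} H(X_{Λ'}). -/
/-- Shannon entropy (in nats) of a finite-valued random variable. -/
noncomputable def ent {Ω β : Type*} [Fintype Ω] [Fintype β] [DecidableEq β]
    (p : Ω → ℝ) (f : Ω → β) : ℝ :=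
  ∑ b : β, Real.negMulLog (∑ ω ∈ Finset.univ.filter fun ω => f ω = b, p ω)

/-- Joint entropy `H(X_A)` of the subvector of `X` indexed by `A`. -/
noncomputable def jent {N : ℕ} {Ω α : Type*} [Fintype Ω] [Fintype α] [DecidableEq α]
    (p : Ω → ℝ) (X : Fin N → Ω → α) (A : Finset (Fin N)) : ℝ :=
  ent p (fun ω i => if i ∈ A then some (X i ω) else (none : Option α))

/-- Elementary compression of a multiset of subsets: replace members `A, B`
by `A∩B, A∪B`. -/
def ElemComp {N : ℕ} (Γ Λ : Multiset (Finset (Fin N))) : Prop :=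
  ∃ (Γ₀ : Multiset (Finset (Fin N))) (A B : Finset (Fin N)),
    Γ = A ::ₘ B ::ₘ Γ₀ ∧ Λ = (A ∩ B) ::ₘ (A ∪ B) ::ₘ Γ₀

/-!
Each elementary compression replaces `H(X_A) + H(X_B)` by `H(X_{A∩B}) + H(X_{A∪B})`, so it suffices
that entropy is submodular. Writing `a = X_A`, `b = X_B`, the vector `X_{A∪B}` carries the same
information as the pair `(a, b)`, and `c = X_{A∩B}` is a function of `a` and also of `b`. Then
`H(c) + H(a, b) - H(a) - H(b) = 𝔼 log (P(a) P(b) / (P(a, b) P(c)))`, and `log t ≤ t - 1` bounds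
this by `Σ_{x, y over the same z} P(a = x) P(b = y) / P(c = z) - 1 ≤ 0`.
-/

open Finset Real

section FiberMass

variable {Ω β γ : Type*} [Fintype Ω] [DecidableEq β] (p : Ω → ℝ) (f : Ω → β)

def fiberMass (b : β) : ℝ := ∑ ω ∈ univ.filter fun ω => f ω = b, p ω

variable {p}

theorem fiberMass_nonneg (hp : ∀ ω, 0 ≤ p ω) (b : β) : 0 ≤ fiberMass p f b :=
  sum_nonneg fun ω _ => hp ω

theorem fiberMass_apply_pos (hp : ∀ ω, 0 ≤ p ω) {ω : Ω} (hω : 0 < p ω) :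
    0 < fiberMass p f (f ω) :=
  hω.trans_le (single_le_sum (fun ω _ => hp ω) (by simp))

variable (p)

theorem fiberMass_comp [Fintype β] [DecidableEq γ] (g : β → γ) (c : γ) :
    fiberMass p (fun ω => g (f ω)) c = ∑ b ∈ univ.filter fun b => g b = c, fiberMass p f b := by
  simp only [fiberMass]
  rw [sum_fiberwise_eq_sum_filter]
  simp

variable [Fintype β]

theorem sum_fiberMass : ∑ b, fiberMass p f b = ∑ ω, p ω :=
  sum_fiberwise univ f p

theorem sum_mul_comp_eq_sum_fiberMass_mul (k : β → ℝ) :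
    ∑ ω, p ω * k (f ω) = ∑ b, fiberMass p f b * k b := by
  rw [← sum_fiberwise univ f]
  refine sum_congr rfl fun b _ => ?_
  rw [fiberMass, sum_mul]
  exact sum_congr rfl fun ω hω => by rw [(mem_filter.1 hω).2]

theorem ent_eq_neg_sum_mul_log : ent p f = -∑ ω, p ω * log (fiberMass p f (f ω)) := by
  rw [sum_mul_comp_eq_sum_fiberMass_mul p f (fun b => log (fiberMass p f b)), ← sum_neg_distrib]
  simp only [ent, negMulLog, neg_mul, fiberMass]

theorem ent_congr_of_fibers_eq {δ : Type*} [Fintype δ] [DecidableEq δ] {g : Ω → δ}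
    (hfg : ∀ ω ω', f ω = f ω' ↔ g ω = g ω') : ent p f = ent p g := by
  have hmass : ∀ ω, fiberMass p f (f ω) = fiberMass p g (g ω) := fun ω => by
    simp only [fiberMass, hfg]
  simp only [ent_eq_neg_sum_mul_log, hmass]

end FiberMass

theorem sum_mul_log_le_sum_mul_sub_sum {Ω : Type*} [Fintype Ω] {p t : Ω → ℝ}
    (hp : ∀ ω, 0 ≤ p ω) (ht : ∀ ω, 0 < p ω → 0 < t ω) :
    ∑ ω, p ω * log (t ω) ≤ ∑ ω, p ω * t ω - ∑ ω, p ω := by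
  rw [← sum_sub_distrib]
  refine sum_le_sum fun ω _ => ?_
  rcases (hp ω).eq_or_lt with h | h
  · simp [← h]
  · calc p ω * log (t ω) ≤ p ω * (t ω - 1) :=
          mul_le_mul_of_nonneg_left (log_le_sub_one_of_pos (ht ω h)) h.le
      _ = p ω * t ω - p ω := by ring

section Submodularity

variable {Ω U V W : Type*} [Fintype Ω] [Fintype U] [Fintype V]
  [DecidableEq U] [DecidableEq V] [DecidableEq W]
  {p : Ω → ℝ} (a : Ω → U) (b : Ω → V) {πa : U → W} {πb : V → W}

theorem sum_mul_fiberMass_ratio_le (hp : ∀ ω, 0 ≤ p ω) (hπ : ∀ ω, πa (a ω) = πb (b ω)) :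
    ∑ ω, p ω * (fiberMass p a (a ω) * fiberMass p b (b ω) /
      (fiberMass p (fun ω => (a ω, b ω)) (a ω, b ω) * fiberMass p (fun ω => πa (a ω)) (πa (a ω))))
      ≤ ∑ ω, p ω := by
  set mab := fiberMass p (fun ω => (a ω, b ω))
  set mc := fiberMass p (fun ω => πa (a ω))
  set G : U × V → ℝ := fun xy => fiberMass p a xy.1 * fiberMass p b xy.2 / mc (πa xy.1)
  have hG : ∀ xy, 0 ≤ G xy := fun xy => by
    have := fiberMass_nonneg a hp xy.1
    have := fiberMass_nonneg b hp xy.2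
    have := fiberMass_nonneg (fun ω => πa (a ω)) hp (πa xy.1)
    positivity
  have hmc : mc = fiberMass p (fun ω => πb (b ω)) := by simp only [mc, hπ]
  calc _ = ∑ xy, mab xy * (G xy / mab xy) := by
        rw [← sum_mul_comp_eq_sum_fiberMass_mul]
        refine sum_congr rfl fun ω _ => ?_
        simp only [G, div_div, mul_comm (mab _)]
    -- an `(a, b)`-fibre of positive mass lies over a pair with `πa x = πb y`
    _ ≤ ∑ xy : U × V, if πa xy.1 = πb xy.2 then G xy else 0 := by
        refine sum_le_sum fun xy _ => ?_
        by_cases h0 : mab xy = 0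
        · rw [h0, zero_mul]; split_ifs <;> simp [hG]
        · obtain ⟨ω, hω⟩ := nonempty_of_sum_ne_zero h0
          simp only [mem_filter, mem_univ, true_and] at hω
          rw [if_pos (by rw [← hω]; exact hπ ω), mul_div_cancel₀ _ h0]
    _ = ∑ x, fiberMass p a x * (mc (πa x) / mc (πa x)) := by
        rw [Fintype.sum_prod_type]
        refine sum_congr rfl fun x _ => ?_
        rw [← sum_filter]
        have hfib : ∑ y ∈ univ.filter (fun y => πa x = πb y), fiberMass p b y = mc (πa x) := by
          simp only [hmc, fiberMass_comp, eq_comm]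
        rw [← mul_div_assoc]
        nth_rw 1 [← hfib]
        rw [mul_sum, sum_div]
    _ ≤ ∑ x, fiberMass p a x :=
        sum_le_sum fun x _ => mul_le_of_le_one_right (fiberMass_nonneg a hp x) (div_self_le_one _)
    _ = ∑ ω, p ω := sum_fiberMass p a

theorem ent_comp_add_ent_prod_le [Fintype W] (hp : ∀ ω, 0 ≤ p ω)
    (hπ : ∀ ω, πa (a ω) = πb (b ω)) :
    ent p (fun ω => πa (a ω)) + ent p (fun ω => (a ω, b ω)) ≤ ent p a + ent p b := by
  have hdiff : ent p (fun ω => πa (a ω)) + ent p (fun ω => (a ω, b ω)) - ent p a - ent p b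
      = ∑ ω, p ω * log (fiberMass p a (a ω) * fiberMass p b (b ω) /
          (fiberMass p (fun ω => (a ω, b ω)) (a ω, b ω) *
            fiberMass p (fun ω => πa (a ω)) (πa (a ω)))) := by
    simp only [ent_eq_neg_sum_mul_log, ← sum_sub_distrib, ← sum_neg_distrib, ← sum_add_distrib]
    refine sum_congr rfl fun ω _ => ?_
    rcases (hp ω).eq_or_lt with h | h
    · simp [← h]
    have ha := fiberMass_apply_pos a hp h
    have hb := fiberMass_apply_pos b hp h
    have hab := fiberMass_apply_pos (fun ω => (a ω, b ω)) hp h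
    have hc := fiberMass_apply_pos (fun ω => πa (a ω)) hp h
    rw [log_div (by positivity) (by positivity), log_mul ha.ne' hb.ne', log_mul hab.ne' hc.ne']
    ring
  have hgibbs := sum_mul_log_le_sum_mul_sub_sum hp fun ω h =>
    div_pos (mul_pos (fiberMass_apply_pos a hp h) (fiberMass_apply_pos b hp h))
      (mul_pos (fiberMass_apply_pos (fun ω => (a ω, b ω)) hp h)
        (fiberMass_apply_pos (fun ω => πa (a ω)) hp h))
  linarith [sum_mul_fiberMass_ratio_le a b hp hπ]

end Submodularity

section Mask

variable {ι β : Type*} [DecidableEq ι]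

def mask (C : Finset ι) (s : ι → Option β) : ι → Option β := fun i => if i ∈ C then s i else none

theorem mask_mask_of_subset {C D : Finset ι} (h : C ⊆ D) (s : ι → Option β) :
    mask C (mask D s) = mask C s := by
  funext i
  by_cases hi : i ∈ C
  · simp [mask, hi, h hi]
  · simp [mask, hi]

theorem mask_union_eq_mask_union_iff {A B : Finset ι} {s t : ι → Option β} :
    mask (A ∪ B) s = mask (A ∪ B) t ↔ mask A s = mask A t ∧ mask B s = mask B t := by
  simp only [funext_iff, ← forall_and]
  refine forall_congr' fun i => ?_
  by_cases hA : i ∈ A <;> by_cases hB : i ∈ B <;> simp [mask, hA, hB]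

end Mask

theorem jent_inter_add_jent_union_le {N : ℕ} {Ω α : Type*} [Fintype Ω] [Fintype α]
    [DecidableEq α] {p : Ω → ℝ} (hp : ∀ ω, 0 ≤ p ω) (X : Fin N → Ω → α) (A B : Finset (Fin N)) :
    jent p X (A ∩ B) + jent p X (A ∪ B) ≤ jent p X A + jent p X B := by
  let x : Ω → Fin N → Option α := fun ω i => some (X i ω)
  have hjent : ∀ C, jent p X C = ent p (fun ω => mask C (x ω)) := fun C => rfl
  have hinter : jent p X (A ∩ B) = ent p (fun ω => mask (A ∩ B) (mask A (x ω))) := by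
    simp only [hjent, mask_mask_of_subset inter_subset_left]
  have hunion : jent p X (A ∪ B) = ent p (fun ω => (mask A (x ω), mask B (x ω))) :=
    (hjent _).trans <| ent_congr_of_fibers_eq p _ fun ω ω' => by
      rw [Prod.mk.injEq]
      exact mask_union_eq_mask_union_iff
  rw [hinter, hunion, hjent A, hjent B]
  exact ent_comp_add_ent_prod_le (fun ω => mask A (x ω)) (fun ω => mask B (x ω)) hp
    (πa := mask (A ∩ B)) (πb := mask (A ∩ B)) fun ω => by
    simp only [mask_mask_of_subset inter_subset_left, mask_mask_of_subset inter_subset_right]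

theorem sum_map_le_of_reflTransGen_elemComp {N : ℕ} {M : Type*} [AddCommMonoid M]
    [PartialOrder M] [IsOrderedAddMonoid M] (f : Finset (Fin N) → M)
    (hf : ∀ A B, f (A ∩ B) + f (A ∪ B) ≤ f A + f B) {Γ Λ : Multiset (Finset (Fin N))}
    (h : Relation.ReflTransGen ElemComp Γ Λ) : (Λ.map f).sum ≤ (Γ.map f).sum := by
  induction h with
  | refl => exact le_rfl
  | tail _ hstep ih =>
    obtain ⟨Γ₀, A, B, rfl, rfl⟩ := hstep
    refine le_trans ?_ ih
    simp only [Multiset.map_cons, Multiset.sum_cons, ← add_assoc]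
    exact add_le_add (hf A B) le_rfl

theorem stmt7_general {N : ℕ} {Ω α : Type*} [Fintype Ω] [Fintype α] [DecidableEq α]
    (p : Ω → ℝ) (hp0 : ∀ ω, 0 ≤ p ω)
    (X : Fin N → Ω → α)
    (Γ Λ : Multiset (Finset (Fin N)))
    (h : Relation.ReflTransGen ElemComp Γ Λ) :
    (Λ.map (jent p X)).sum ≤ (Γ.map (jent p X)).sum :=
  sum_map_le_of_reflTransGen_elemComp (jent p X) (jent_inter_add_jent_union_le hp0 X) h

/-- if `Λ` is a compression of `Γ` (a finite sequence of elementary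
compressions), then `Σ_{Γ'∈Γ} H(X_{Γ'}) ≥ Σ_{Λ'∈Λ} H(X_{Λ'})`. -/
theorem stmt7 {N : ℕ} {Ω α : Type*} [Fintype Ω] [Fintype α] [DecidableEq α]
    (p : Ω → ℝ) (hp0 : ∀ ω, 0 ≤ p ω) (hp1 : ∑ ω, p ω = 1)
    (X : Fin N → Ω → α)
    (Γ Λ : Multiset (Finset (Fin N)))
    (h : Relation.ReflTransGen ElemComp Γ Λ) :
    (Λ.map (jent p X)).sum ≤ (Γ.map (jent p X)).sum :=
  stmt7_general p hp0 X Γ Λ h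
end

section
/- Associate to a multiset Γ of sets the graph G_Γ whose vertices are the member sets and where two vertices are adjacent iff neither set is contained in the other. If Λ is obtained from Γ by a non-trivial elementary compression (replacing incomparable A, B by A∩B and A∪B), then G_Λ has strictly fewer edges than G_Γ. -/
/-!
Count ordered pairs of incomparable members instead of edges, so that every edge is counted
twice. Let `σ` swap `i` and `j`, and add up, for every ordered pair `p`, the incomparability
indicators of `p` and of `σ p`. The compression does not increase any of these summands: for a
third member `C`, at most as many of `A ⊓ B`, `A ⊔ B` as of `A`, `B` are incomparable to `C`
(in any lattice), and the summand of `(i, j)` drops to `0` since `A ⊓ B ≤ A ⊔ B`.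
-/

/-- Number of edges of the graph associated with the indexed multiset `V`: vertices are the
members `V k` and two members are adjacent iff neither is contained in the other. -/
def edgeCount {n : ℕ} {γ : Type*} [DecidableEq γ] (V : Fin n → Finset γ) : ℕ :=
  (Finset.univ.filter fun p : Fin n × Fin n =>
    p.1 < p.2 ∧ ¬ V p.1 ⊆ V p.2 ∧ ¬ V p.2 ⊆ V p.1).card

open Finset Function

theorem card_filter_eq_two_mul_card_filter_lt {ι : Type*} [Fintype ι] [LinearOrder ι]
    (r : ι → ι → Prop) [DecidableRel r] (hsymm : ∀ a b, r a b → r b a)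
    (hirrefl : ∀ a, ¬ r a a) :
    #{p : ι × ι | r p.1 p.2} = 2 * #{p : ι × ι | p.1 < p.2 ∧ r p.1 p.2} := by
  have hsplit : #{p : ι × ι | r p.1 p.2} =
      #{p : ι × ι | p.1 < p.2 ∧ r p.1 p.2} + #{p : ι × ι | p.2 < p.1 ∧ r p.1 p.2} := by
    rw [← card_union_of_disjoint (disjoint_filter.2 fun p _ h h' => lt_asymm h.1 h'.1),
      ← filter_or]
    congr 1
    ext p
    simp only [mem_filter, mem_univ, true_and, ← or_and_right]
    exact ⟨fun h => ⟨(ne_of_apply_ne (r p.1) fun e => hirrefl _ (e ▸ h)).lt_or_gt, h⟩, And.right⟩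
  have hswap : #{p : ι × ι | p.2 < p.1 ∧ r p.1 p.2} = #{p : ι × ι | p.1 < p.2 ∧ r p.1 p.2} :=
    card_equiv (Equiv.prodComm ι ι) fun p => by
      simpa using and_congr_right fun _ => ⟨hsymm _ _, hsymm _ _⟩
  omega

section Lattice

variable {α : Type*} [Lattice α] {a b c : α}

theorem IncompRel.of_inf_of_sup (hinf : IncompRel (· ≤ ·) (a ⊓ b) c)
    (hsup : IncompRel (· ≤ ·) (a ⊔ b) c) :
    IncompRel (· ≤ ·) a c ∧ IncompRel (· ≤ ·) b c :=
  ⟨⟨fun h => hinf.not_le (inf_le_left.trans h), fun h => hsup.not_ge (h.trans le_sup_left)⟩,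
    ⟨fun h => hinf.not_le (inf_le_right.trans h), fun h => hsup.not_ge (h.trans le_sup_right)⟩⟩

theorem IncompRel.of_inf (h : IncompRel (· ≤ ·) (a ⊓ b) c) :
    IncompRel (· ≤ ·) a c ∨ IncompRel (· ≤ ·) b c := by
  by_contra! hab
  simp only [IncompRel, not_and_or, not_not] at hab
  obtain ⟨ha | ha, hb | hb⟩ := hab
  · exact h.not_le (inf_le_left.trans ha)
  · exact h.not_le (inf_le_left.trans ha)
  · exact h.not_le (inf_le_right.trans hb)
  · exact h.not_ge (le_inf ha hb)

theorem IncompRel.of_sup (h : IncompRel (· ≤ ·) (a ⊔ b) c) :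
    IncompRel (· ≤ ·) a c ∨ IncompRel (· ≤ ·) b c := by
  by_contra! hab
  simp only [IncompRel, not_and_or, not_not] at hab
  obtain ⟨ha | ha, hb | hb⟩ := hab
  · exact h.not_le (sup_le ha hb)
  · exact h.not_ge (hb.trans le_sup_right)
  · exact h.not_ge (ha.trans le_sup_left)
  · exact h.not_ge (ha.trans le_sup_left)

variable [DecidableLE α]

def incompIndicator (x y : α) : ℕ := if IncompRel (· ≤ ·) x y then 1 else 0

theorem incompIndicator_comm (x y : α) : incompIndicator x y = incompIndicator y x := by
  simp only [incompIndicator, incompRel_comm]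

theorem incompIndicator_inf_add_sup_le (a b c : α) :
    incompIndicator (a ⊓ b) c + incompIndicator (a ⊔ b) c ≤
      incompIndicator a c + incompIndicator b c := by
  have hboth := @IncompRel.of_inf_of_sup _ _ a b c
  have hinf := @IncompRel.of_inf _ _ a b c
  have hsup := @IncompRel.of_sup _ _ a b c
  unfold incompIndicator
  split_ifs <;> simp_all

variable {ι : Type*} [Fintype ι]

def incompPairCount (V : ι → α) : ℕ := #{p : ι × ι | IncompRel (· ≤ ·) (V p.1) (V p.2)}

theorem incompPairCount_eq_sum (V : ι → α) :
    incompPairCount V = ∑ p : ι × ι, incompIndicator (V p.1) (V p.2) := by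
  rw [incompPairCount, card_filter]
  rfl

end Lattice

section Compression

variable {ι α : Type*} [DecidableEq ι] [Lattice α]

def compress (V : ι → α) (i j : ι) : ι → α := update (update V i (V i ⊓ V j)) j (V i ⊔ V j)

variable {V : ι → α} {i j : ι}

theorem compress_apply_left (hij : i ≠ j) : compress V i j i = V i ⊓ V j := by
  simp [compress, hij]

theorem compress_apply_right : compress V i j j = V i ⊔ V j := by
  simp [compress]

theorem compress_apply_of_ne {k : ι} (hi : k ≠ i) (hj : k ≠ j) : compress V i j k = V k := by
  simp [compress, hi, hj]

theorem not_incompRel_compress (hij : i ≠ j) {x y : ι} (hx : x = i ∨ x = j)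
    (hy : y = i ∨ y = j) : ¬ IncompRel (· ≤ ·) (compress V i j x) (compress V i j y) := by
  have hle : compress V i j i ≤ compress V i j j := by
    rw [compress_apply_left hij, compress_apply_right]
    exact inf_le_left.trans le_sup_left
  rcases hx with rfl | rfl <;> rcases hy with rfl | rfl
  exacts [le_rfl.not_incompRel, hle.not_incompRel, fun h => hle.not_incompRel h.symm,
    le_rfl.not_incompRel]

variable [DecidableLE α]

theorem incompIndicator_compress_add_swap_le (hij : i ≠ j) (a b : ι) :
    incompIndicator (compress V i j a) (compress V i j b) +
        incompIndicator (compress V i j (Equiv.swap i j a)) (compress V i j (Equiv.swap i j b)) ≤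
      incompIndicator (V a) (V b) +
        incompIndicator (V (Equiv.swap i j a)) (V (Equiv.swap i j b)) := by
  by_cases ha : a = i ∨ a = j <;> by_cases hb : b = i ∨ b = j
  · have hσa : Equiv.swap i j a = i ∨ Equiv.swap i j a = j := by
      rcases ha with rfl | rfl <;> simp
    have hσb : Equiv.swap i j b = i ∨ Equiv.swap i j b = j := by
      rcases hb with rfl | rfl <;> simp
    simp [incompIndicator, not_incompRel_compress hij ha hb, not_incompRel_compress hij hσa hσb]
  · push Not at hb
    rw [Equiv.swap_apply_of_ne_of_ne hb.1 hb.2, compress_apply_of_ne hb.1 hb.2]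
    rcases ha with rfl | rfl
    · simpa [compress_apply_left hij, compress_apply_right] using
        incompIndicator_inf_add_sup_le (V a) (V j) (V b)
    · simpa [compress_apply_left hij, compress_apply_right, add_comm] using
        incompIndicator_inf_add_sup_le (V i) (V a) (V b)
  · push Not at ha
    rw [Equiv.swap_apply_of_ne_of_ne ha.1 ha.2, compress_apply_of_ne ha.1 ha.2]
    rcases hb with rfl | rfl
    · simpa [compress_apply_left hij, compress_apply_right, incompIndicator_comm (V a)] using
        incompIndicator_inf_add_sup_le (V b) (V j) (V a)
    · simpa [compress_apply_left hij, compress_apply_right, add_comm,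
        incompIndicator_comm (V a)] using incompIndicator_inf_add_sup_le (V i) (V b) (V a)
  · push Not at ha hb
    simp [Equiv.swap_apply_of_ne_of_ne, compress_apply_of_ne, ha, hb]

theorem incompPairCount_compress_lt [Fintype ι] (hij : i ≠ j)
    (h : IncompRel (· ≤ ·) (V i) (V j)) :
    incompPairCount (compress V i j) < incompPairCount V := by
  set σ := Equiv.swap i j
  have two_mul_eq (U : ι → α) : 2 * incompPairCount U =
      ∑ p : ι × ι, (incompIndicator (U p.1) (U p.2) + incompIndicator (U (σ p.1)) (U (σ p.2))) := by
    rw [incompPairCount_eq_sum, two_mul, sum_add_distrib]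
    exact congrArg _ (Equiv.sum_comp (σ.prodCongr σ) fun p => incompIndicator (U p.1) (U p.2)).symm
  suffices 2 * incompPairCount (compress V i j) < 2 * incompPairCount V by omega
  rw [two_mul_eq, two_mul_eq]
  refine sum_lt_sum (fun p _ => incompIndicator_compress_add_swap_le hij p.1 p.2)
    ⟨(i, j), mem_univ _, ?_⟩
  have hσi : σ i = j := Equiv.swap_apply_left i j
  have hσj : σ j = i := Equiv.swap_apply_right i j
  simp only [hσi, hσj, incompIndicator, if_pos h, if_pos h.symm,
    if_neg (not_incompRel_compress hij (.inl rfl) (.inr rfl)),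
    if_neg (not_incompRel_compress hij (.inr rfl) (.inl rfl))]
  omega

end Compression

theorem two_mul_edgeCount {n : ℕ} {γ : Type*} [DecidableEq γ] (V : Fin n → Finset γ) :
    2 * edgeCount V = incompPairCount V := by
  rw [incompPairCount, card_filter_eq_two_mul_card_filter_lt
    (fun a b => IncompRel (· ≤ ·) (V a) (V b)) (fun _ _ h => h.symm) fun _ h => h.1 le_rfl]
  rfl

/-- a non-trivial elementary compression (replacing incomparable members
`V i`, `V j` by their intersection and union) strictly decreases the number of edges of the
associated graph. -/
theorem stmt12 {n : ℕ} {γ : Type*} [DecidableEq γ] (V : Fin n → Finset γ)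
    (i j : Fin n) (hij : i ≠ j)
    (h1 : ¬ V i ⊆ V j) (h2 : ¬ V j ⊆ V i) :
    edgeCount (Function.update (Function.update V i (V i ∩ V j)) j (V i ∪ V j))
      < edgeCount V := by
  have h := incompPairCount_compress_lt (V := V) hij ⟨h1, h2⟩
  rw [← two_mul_edgeCount, ← two_mul_edgeCount] at h
  exact Nat.lt_of_mul_lt_mul_left h
end

section
/- For the combination network with two public receivers (I₁ = {1,2}) and private receivers I₂, the projection of the polytope {(R₁,R₂,(α_S)_{S⊆{1,2}}) : α_S ≥ 0; R₂ = Σ_S α_S; R₁ + Σ_{S∋i} α_S ≤ Σ_{S∋i}|E_S| for i=1,2; R₂ ≤ Σ_{S∈Λ} α_S + Σ_{S∈Λᶜ}|E_{S,p}| for all superset-saturated Λ and all p; R₁+R₂ ≤ Σ_S |E_{S,p}| for all p} onto (R₁,R₂) equals {(R₁,R₂) ≥ 0 : R₁ ≤ min(|E_{{1}}|+|E_{{1,2}}|, |E_{{2}}|+|E_{{1,2}}|); R₁+R₂ ≤ min_p Σ_{S⊆{1,2}} |E_{S,p}|; 2R₁+R₂ ≤ min_p (|E_{{1}}| + 2|E_{{1,2}}|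 + |E_{{2}}| + |E_{φ,p}|)}. -/
/-- A superset-saturated family of subsets of `{1,2}`. -/
def Saturated (Λ : Finset (Finset (Fin 2))) : Prop :=
  ∀ S ∈ Λ, ∀ T : Finset (Fin 2), S ⊆ T → T ∈ Λ

/-! Write a split as `α {0,1} = t`, `α {0} = u - t`, `α {1} = v - t`, `α ∅ = R₂ - u - v + t`.
The bounds are necessary by the two capacity constraints and the constraint for
`Λ = {{0},{1},{0,1}}`. Conversely, with the residual capacities `a = E {0} + E {0,1} - R₁`,
`b = E {1} + E {0,1} - R₁` and `K = max 0 (E {0,1} - R₁)`, the two cut bounds reduce the constraint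
of every saturated `Λ` and every `p` to one of `min K R₂ ≤ t`, `min a R₂ ≤ u`, `min b R₂ ≤ v`,
`min (a + b - K) R₂ ≤ u + v - t`; all of them hold for `u = min a R₂`, `v = min b R₂` and
`t = max (min K R₂) (u + v - R₂)`. -/

open Finset

theorem sum_finset_fin_two {M : Type*} [AddCommMonoid M] (f : Finset (Fin 2) → M) :
    ∑ S : Finset (Fin 2), f S = f ∅ + f {0} + f {1} + f {0, 1} := by
  rw [show (univ : Finset (Finset (Fin 2))) = {∅, {0}, {1}, {0, 1}} by decide,
    sum_insert (by decide), sum_insert (by decide), sum_pair (by decide), add_assoc, add_assoc]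

theorem sum_filter_mem_fin_two {M : Type*} [AddCommMonoid M] (i : Fin 2)
    (f : Finset (Fin 2) → M) :
    ∑ S ∈ univ.filter (fun S : Finset (Fin 2) => i ∈ S), f S = f {i} + f {0, 1} := by
  have h : ∀ i : Fin 2, univ.filter (fun S : Finset (Fin 2) => i ∈ S) = {{i}, {0, 1}} := by
    decide
  rw [h, sum_pair]
  fin_cases i <;> decide

theorem Saturated.eq_or_eq {Λ : Finset (Finset (Fin 2))} (hΛ : Saturated Λ) :
    Λ = ∅ ∨ Λ = {{0, 1}} ∨ Λ = {{0}, {0, 1}} ∨ Λ = {{1}, {0, 1}} ∨ Λ = {{0}, {1}, {0, 1}} ∨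
      Λ = univ := by
  revert Λ
  unfold Saturated
  decide

theorem Saturated.le_sum_add_sum_compl {Λ : Finset (Finset (Fin 2))} (hΛ : Saturated Λ)
    {f g : Finset (Fin 2) → ℝ} {x : ℝ}
    (h_empty : x ≤ g ∅ + g {0} + g {1} + g {0, 1})
    (h_top : x ≤ g ∅ + g {0} + g {1} + f {0, 1})
    (h_zero : x ≤ g ∅ + f {0} + g {1} + f {0, 1})
    (h_one : x ≤ g ∅ + g {0} + f {1} + f {0, 1})
    (h_nonempty : x ≤ g ∅ + f {0} + f {1} + f {0, 1})
    (h_univ : x ≤ f ∅ + f {0} + f {1} + f {0, 1}) :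
    x ≤ ∑ S ∈ Λ, f S + ∑ S ∈ Λᶜ, g S := by
  classical
  have h := sum_piecewise univ Λ f g
  rw [univ_inter, ← compl_eq_univ_sdiff, sum_finset_fin_two] at h
  rw [← h]
  rcases hΛ.eq_or_eq with rfl | rfl | rfl | rfl | rfl | rfl <;> simp [piecewise] <;> assumption

theorem exists_overlap {a b K R : ℝ} (hKa : K ≤ a) (hKb : K ≤ b) :
    ∃ t, min K R ≤ t ∧ t ≤ min a R ∧ t ≤ min b R ∧ min a R + min b R - t ≤ R ∧
      min (a + b - K) R ≤ min a R + min b R - t := by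
  refine ⟨max (min K R) (min a R + min b R - R), le_max_left _ _, ?_, ?_,
    by linarith [le_max_right (min K R) (min a R + min b R - R)], ?_⟩ <;>
  · simp only [min_def, max_def]
    split_ifs <;> linarith

theorem two_mul_add_le_of_split {R₁ R₂ : ℝ} {α E e : Finset (Fin 2) → ℝ} (hα : ∀ S, 0 ≤ α S)
    (hcap : ∀ i : Fin 2, R₁ + ∑ S ∈ univ.filter (fun S : Finset (Fin 2) => i ∈ S), α S
      ≤ ∑ S ∈ univ.filter (fun S : Finset (Fin 2) => i ∈ S), E S)
    (hΛ : R₂ ≤ ∑ S ∈ {{0}, {1}, {0, 1}}, α S + ∑ S ∈ {{0}, {1}, {0, 1}}ᶜ, e S) :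
    2 * R₁ + R₂ ≤ E {0} + 2 * E {0, 1} + E {1} + e ∅ := by
  have h0 := hcap 0
  have h1 := hcap 1
  rw [sum_filter_mem_fin_two, sum_filter_mem_fin_two] at h0 h1
  rw [show ({{0}, {1}, {0, 1}}ᶜ : Finset (Finset (Fin 2))) = {∅} by decide, sum_singleton,
    sum_insert (by decide), sum_pair (by decide)] at hΛ
  linarith [hα {0, 1}]

theorem exists_split_of_bounds {P : Type*} {E : Finset (Fin 2) → ℝ} {Ep : Finset (Fin 2) → P → ℝ}
    (hE : ∀ S, 0 ≤ E S) (hEp : ∀ S p, 0 ≤ Ep S p) (hEpE : ∀ S p, Ep S p ≤ E S) {R₁ R₂ : ℝ}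
    (h₁ : 0 ≤ R₁) (h₂ : 0 ≤ R₂) (hcap₀ : R₁ ≤ E {0} + E {0, 1}) (hcap₁ : R₁ ≤ E {1} + E {0, 1})
    (hsum : ∀ p, R₁ + R₂ ≤ ∑ S : Finset (Fin 2), Ep S p)
    (hsum₂ : ∀ p, 2 * R₁ + R₂ ≤ E {0} + 2 * E {0, 1} + E {1} + Ep ∅ p) :
    ∃ α : Finset (Fin 2) → ℝ,
      (∀ S, 0 ≤ α S) ∧
      R₂ = ∑ S : Finset (Fin 2), α S ∧
      (∀ i : Fin 2,
        R₁ + ∑ S ∈ univ.filter (fun S : Finset (Fin 2) => i ∈ S), α S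
          ≤ ∑ S ∈ univ.filter (fun S : Finset (Fin 2) => i ∈ S), E S) ∧
      (∀ p : P, ∀ Λ : Finset (Finset (Fin 2)), Saturated Λ →
        R₂ ≤ ∑ S ∈ Λ, α S + ∑ S ∈ Λᶜ, Ep S p) := by
  set a := E {0} + E {0, 1} - R₁
  set b := E {1} + E {0, 1} - R₁
  set K := max 0 (E {0, 1} - R₁)
  obtain ⟨t, hKt, hta, htb, hR, hab⟩ :=
    exists_overlap (a := a) (b := b) (K := K) (R := R₂)
      (max_le (by linarith) (by linarith [hE {0}])) (max_le (by linarith) (by linarith [hE {1}]))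
  set u := min a R₂
  set v := min b R₂
  let α : Finset (Fin 2) → ℝ := fun S =>
    if 0 ∈ S then (if 1 ∈ S then t else u - t) else (if 1 ∈ S then v - t else R₂ - u - v + t)
  have ht : 0 ≤ t := (le_min (le_max_left _ _) h₂).trans hKt
  refine ⟨α, fun S => ?_, ?_, fun i => ?_, fun p Λ hΛ => ?_⟩
  · simp only [α]
    split_ifs <;> linarith
  · simp [α, sum_finset_fin_two]
    ring
  · rw [sum_filter_mem_fin_two, sum_filter_mem_fin_two]
    fin_cases i <;> simp [α] <;> linarith [min_le_left a R₂, min_le_left b R₂]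
  · have hs := hsum p
    rw [sum_finset_fin_two] at hs
    have := hEp ∅ p; have := hEp {0} p; have := hEp {1} p
    have := hEpE {0} p; have := hEpE {1} p; have := hEpE {0, 1} p
    refine hΛ.le_sum_add_sum_compl (by linarith) ?_ ?_ ?_ ?_ (by simp [α]; linarith) <;>
      simp [α]
    · have : R₂ - (Ep ∅ p + Ep {0} p + Ep {1} p) ≤ t :=
        (le_min (le_max_of_le_right (by linarith)) (by linarith)).trans hKt
      linarith
    · have : R₂ - (Ep ∅ p + Ep {1} p) ≤ u := le_min (by linarith) (by linarith)
      linarith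
    · have : R₂ - (Ep ∅ p + Ep {0} p) ≤ v := le_min (by linarith) (by linarith)
      linarith
    · have hK : K ≤ a + b - (R₂ - Ep ∅ p) := max_le (by linarith [hsum₂ p]) (by linarith)
      have : R₂ - Ep ∅ p ≤ u + v - t := (le_min (le_sub_comm.mpr hK) (by linarith)).trans hab
      linarith

theorem stmt15_general {P : Type*}
    (E : Finset (Fin 2) → ℝ) (Ep : Finset (Fin 2) → P → ℝ)
    (hE : ∀ S, 0 ≤ E S) (hEp : ∀ S p, 0 ≤ Ep S p) (hEpE : ∀ S p, Ep S p ≤ E S) :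
    {x : ℝ × ℝ | 0 ≤ x.1 ∧ 0 ≤ x.2 ∧
        ∃ α : Finset (Fin 2) → ℝ,
          (∀ S, 0 ≤ α S) ∧
          x.2 = ∑ S : Finset (Fin 2), α S ∧
          (∀ i : Fin 2,
            x.1 + ∑ S ∈ Finset.univ.filter (fun S : Finset (Fin 2) => i ∈ S), α S
              ≤ ∑ S ∈ Finset.univ.filter (fun S : Finset (Fin 2) => i ∈ S), E S) ∧
          (∀ p : P, ∀ Λ : Finset (Finset (Fin 2)), Saturated Λ →
            x.2 ≤ ∑ S ∈ Λ, α S + ∑ S ∈ Λᶜ, Ep S p) ∧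
          (∀ p : P, x.1 + x.2 ≤ ∑ S : Finset (Fin 2), Ep S p)} =
    {x : ℝ × ℝ | 0 ≤ x.1 ∧ 0 ≤ x.2 ∧
        x.1 ≤ E {0} + E {0, 1} ∧ x.1 ≤ E {1} + E {0, 1} ∧
        (∀ p : P, x.1 + x.2 ≤ ∑ S : Finset (Fin 2), Ep S p) ∧
        (∀ p : P, 2 * x.1 + x.2 ≤ E {0} + 2 * E {0, 1} + E {1} + Ep ∅ p)} := by
  ext ⟨R₁, R₂⟩
  constructor
  · rintro ⟨h₁, h₂, α, hα, -, hcap, hΛ, hsum⟩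
    have hcap₀ := hcap 0
    have hcap₁ := hcap 1
    rw [sum_filter_mem_fin_two, sum_filter_mem_fin_two] at hcap₀ hcap₁
    exact ⟨h₁, h₂, by linarith [hα {0}, hα {0, 1}], by linarith [hα {1}, hα {0, 1}], hsum,
      fun p => two_mul_add_le_of_split hα hcap (hΛ p _ (by unfold Saturated; decide))⟩
  · rintro ⟨h₁, h₂, hcap₀, hcap₁, hsum, hsum₂⟩
    obtain ⟨α, hα, hR₂, hcap, hΛ⟩ := exists_split_of_bounds hE hEp hEpE h₁ h₂ hcap₀ hcap₁ hsum hsum₂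
    exact ⟨h₁, h₂, α, hα, hR₂, hcap, hΛ, hsum⟩

/-- for two public receivers, the projection onto `(R₁,R₂)` of the
rate-splitting polytope equals the explicit region with the cut bounds on `R₁`,
`R₁ + R₂`, and `2R₁ + R₂`. Here `E S` is the number of resources seen exactly by the
public receivers in `S`, and `Ep S p` those among them also reaching private receiver `p`. -/
theorem stmt15 {P : Type*} [Fintype P]
    (E : Finset (Fin 2) → ℝ) (Ep : Finset (Fin 2) → P → ℝ)
    (hE : ∀ S, 0 ≤ E S) (hEp : ∀ S p, 0 ≤ Ep S p) (hEpE : ∀ S p, Ep S p ≤ E S) :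
    {x : ℝ × ℝ | 0 ≤ x.1 ∧ 0 ≤ x.2 ∧
        ∃ α : Finset (Fin 2) → ℝ,
          (∀ S, 0 ≤ α S) ∧
          x.2 = ∑ S : Finset (Fin 2), α S ∧
          (∀ i : Fin 2,
            x.1 + ∑ S ∈ Finset.univ.filter (fun S : Finset (Fin 2) => i ∈ S), α S
              ≤ ∑ S ∈ Finset.univ.filter (fun S : Finset (Fin 2) => i ∈ S), E S) ∧
          (∀ p : P, ∀ Λ : Finset (Finset (Fin 2)), Saturated Λ →
            x.2 ≤ ∑ S ∈ Λ, α S + ∑ S ∈ Λᶜ, Ep S p) ∧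
          (∀ p : P, x.1 + x.2 ≤ ∑ S : Finset (Fin 2), Ep S p)} =
    {x : ℝ × ℝ | 0 ≤ x.1 ∧ 0 ≤ x.2 ∧
        x.1 ≤ E {0} + E {0, 1} ∧ x.1 ≤ E {1} + E {0, 1} ∧
        (∀ p : P, x.1 + x.2 ≤ ∑ S : Finset (Fin 2), Ep S p) ∧
        (∀ p : P, 2 * x.1 + x.2 ≤ E {0} + 2 * E {0, 1} + E {1} + Ep ∅ p)} :=
  stmt15_general E Ep hE hEp hEpE
end
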